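/- If T is a bounded linear operator on a complex Hilbert space with range of T orthogonal to range of T* (i.e., ⟨Tf, T*g⟩ = 0 for all f, g ∈ H), then w(T) = ‖T‖/2. -/

import Mathlib

noncomputable def numRadius {H : Type*} [NormedAddCommGroup H] [InnerProductSpace ℂ H]
    (T : H →L[ℂ] H) : ℝ :=
  sSup {r : ℝ | ∃ x : H, ‖x‖ = 1 ∧ r = ‖(inner ℂ (T x) x : ℂ)‖}

/-!
The hypothesis says `T² = 0`, since `⟪T f, T† g⟫ = ⟪T² f, g⟫`. The bound `‖T‖ ≤ 2 w(T)` holds for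
every operator, by polarization. Conversely, when `T² = 0`, split `x = u + v` with `u` on the line
through `T x` and `v` orthogonal to it. Then `T u = 0`, so `⟪T x, x⟫ = ⟪T v, u⟫`, whose modulus is
at most `‖T‖ ‖u‖ ‖v‖ ≤ ‖T‖ (‖u‖² + ‖v‖²) / 2 = ‖T‖ ‖x‖² / 2`.
-/

open ContinuousLinearMap

section NumRadius

variable {H : Type*} [NormedAddCommGroup H] [InnerProductSpace ℂ H]

lemma numRadius_le {T : H →L[ℂ] H} {c : ℝ} (hc : 0 ≤ c)
    (h : ∀ x : H, ‖x‖ = 1 → ‖(inner ℂ (T x) x : ℂ)‖ ≤ c) : numRadius T ≤ c :=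
  Real.sSup_le (by rintro r ⟨x, hx, rfl⟩; exact h x hx) hc

lemma numRadius_nonneg (T : H →L[ℂ] H) : 0 ≤ numRadius T :=
  Real.sSup_nonneg (by rintro r ⟨x, -, rfl⟩; positivity)

lemma norm_inner_self_le_numRadius_mul_sq (T : H →L[ℂ] H) (x : H) :
    ‖(inner ℂ (T x) x : ℂ)‖ ≤ numRadius T * ‖x‖ ^ 2 := by
  rcases eq_or_ne x 0 with rfl | hx
  · simp
  have hbdd : BddAbove {r : ℝ | ∃ x : H, ‖x‖ = 1 ∧ r = ‖(inner ℂ (T x) x : ℂ)‖} := by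
    refine ⟨‖T‖, ?_⟩
    rintro r ⟨y, hy, rfl⟩
    calc ‖(inner ℂ (T y) y : ℂ)‖ ≤ ‖T y‖ * ‖y‖ := norm_inner_le_norm _ _
      _ ≤ ‖T‖ * ‖y‖ * ‖y‖ := by gcongr; exact T.le_opNorm y
      _ = ‖T‖ := by rw [hy, mul_one, mul_one]
  have hx' : 0 < ‖x‖ := norm_pos_iff.mpr hx
  have hunit := le_csSup hbdd ⟨_, norm_smul_inv_norm (𝕜 := ℂ) hx, rfl⟩
  rw [map_smul, inner_smul_left, inner_smul_right, ← mul_assoc, norm_mul, norm_mul,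
    RCLike.norm_conj, norm_inv, RCLike.norm_ofReal, abs_norm] at hunit
  change ‖x‖⁻¹ * ‖x‖⁻¹ * ‖(inner ℂ (T x) x : ℂ)‖ ≤ numRadius T at hunit
  rw [← mul_inv, ← sq, inv_mul_le_iff₀ (by positivity), mul_comm] at hunit
  exact hunit

lemma norm_inner_map_le_numRadius_mul (T : H →L[ℂ] H) (x y : H) :
    ‖(inner ℂ (T x) y : ℂ)‖ ≤ numRadius T * (‖x‖ ^ 2 + ‖y‖ ^ 2) := by
  have hw := norm_inner_self_le_numRadius_mul_sq T
  have hpar := parallelogram_law_with_norm ℂ x y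
  have hpar_I := parallelogram_law_with_norm ℂ x (Complex.I • y)
  rw [norm_smul, Complex.norm_I, one_mul] at hpar_I
  rw [← coe_coe, inner_map_polarization', coe_coe, norm_div, Complex.norm_ofNat,
    div_le_iff₀ four_pos]
  calc _ ≤ ‖(inner ℂ (T (x + y)) (x + y) : ℂ)‖ + ‖(inner ℂ (T (x - y)) (x - y) : ℂ)‖
          + ‖(inner ℂ (T (x + Complex.I • y)) (x + Complex.I • y) : ℂ)‖
          + ‖(inner ℂ (T (x - Complex.I • y)) (x - Complex.I • y) : ℂ)‖ := by
        refine (norm_add_le _ _).trans (add_le_add ((norm_sub_le _ _).trans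
          (add_le_add (norm_sub_le _ _) ?_)) ?_) <;> rw [norm_mul, Complex.norm_I, one_mul]
      _ ≤ numRadius T * (‖x + y‖ ^ 2 + ‖x - y‖ ^ 2 + ‖x + Complex.I • y‖ ^ 2
          + ‖x - Complex.I • y‖ ^ 2) := by
        linarith [hw (x + y), hw (x - y), hw (x + Complex.I • y), hw (x - Complex.I • y)]
      _ = _ := by rw [add_assoc _ (‖x + Complex.I • y‖ ^ 2), hpar, hpar_I]; ring

lemma norm_le_two_mul_numRadius (T : H →L[ℂ] H) : ‖T‖ ≤ 2 * numRadius T := by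
  refine T.opNorm_le_bound (by linarith [numRadius_nonneg T]) fun x => ?_
  rcases eq_or_ne (T x) 0 with hTx | hTx
  · rw [hTx, norm_zero]; linarith [mul_nonneg (numRadius_nonneg T) (norm_nonneg x)]
  have hTx' : 0 < ‖T x‖ := norm_pos_iff.mpr hTx
  -- test `T x` against the vector `y` in its direction with `‖y‖ = ‖x‖`
  have key := norm_inner_map_le_numRadius_mul T x (((‖x‖ / ‖T x‖ : ℝ) : ℂ) • T x)
  rw [inner_smul_right, inner_self_eq_norm_sq_to_K, norm_smul, norm_mul, Complex.norm_real,
    Real.norm_eq_abs, abs_of_nonneg (by positivity), norm_pow, RCLike.norm_ofReal, abs_norm,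
    div_mul_cancel₀ _ hTx'.ne'] at key
  have hx : 0 < ‖x‖ := norm_pos_iff.mpr fun h => hTx (by rw [h, map_zero])
  have hxTx : ‖x‖ * ‖T x‖ ≤ ‖x‖ * (2 * numRadius T * ‖x‖) := by
    convert key using 1 <;> field_simp; ring
  exact le_of_mul_le_mul_left hxTx hx

lemma norm_inner_self_le_half_opNorm_mul_sq {T : H →L[ℂ] H} (hT : T ∘L T = 0) (x : H) :
    ‖(inner ℂ (T x) x : ℂ)‖ ≤ ‖T‖ / 2 * ‖x‖ ^ 2 := by
  set K := ℂ ∙ T x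
  set u := K.starProjection x
  set v := x - u
  have hu : u ∈ K := K.starProjection_apply_mem x
  have hv : v ∈ Kᗮ := K.sub_starProjection_mem_orthogonal x
  have hTu : T u = 0 := by
    obtain ⟨a, ha⟩ := Submodule.mem_span_singleton.mp hu
    rw [← ha, map_smul, ← comp_apply, hT, zero_apply, smul_zero]
  have hTx : T x = T v := by simp [v, hTu]
  have h_inner : (inner ℂ (T x) x : ℂ) = inner ℂ (T x) u := by
    rw [← sub_eq_zero, ← inner_sub_right]
    exact Submodule.inner_right_of_mem_orthogonal (Submodule.mem_span_singleton_self _) hv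
  have hpyth : ‖x‖ ^ 2 = ‖u‖ ^ 2 + ‖v‖ ^ 2 := by
    have := norm_add_sq_eq_norm_sq_add_norm_sq_of_inner_eq_zero u v
      (Submodule.inner_right_of_mem_orthogonal hu hv)
    simpa only [sq, v, add_sub_cancel] using this
  calc ‖(inner ℂ (T x) x : ℂ)‖ = ‖(inner ℂ (T v) u : ℂ)‖ := by rw [h_inner, hTx]
    _ ≤ ‖T v‖ * ‖u‖ := norm_inner_le_norm _ _
    _ ≤ ‖T‖ * ‖v‖ * ‖u‖ := by gcongr; exact T.le_opNorm v
    _ ≤ ‖T‖ / 2 * ‖x‖ ^ 2 := by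
      rw [hpyth]; nlinarith [norm_nonneg T, sq_nonneg (‖u‖ - ‖v‖)]

lemma comp_self_eq_zero_of_inner_adjoint_eq_zero [CompleteSpace H] {T : H →L[ℂ] H}
    (h : ∀ f g : H, (inner ℂ (T f) (adjoint T g) : ℂ) = 0) : T ∘L T = 0 := by
  ext f
  rw [comp_apply, zero_apply]
  have := h f (T (T f))
  rw [adjoint_inner_right] at this
  exact inner_self_eq_zero.mp this

end NumRadius

theorem stmt_18 {H : Type*} [NormedAddCommGroup H] [InnerProductSpace ℂ H] [CompleteSpace H]
    (T : H →L[ℂ] H)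
    (h : ∀ f g : H, (inner ℂ (T f) (ContinuousLinearMap.adjoint T g) : ℂ) = 0) :
    numRadius T = ‖T‖ / 2 := by
  have hT : T ∘L T = 0 := comp_self_eq_zero_of_inner_adjoint_eq_zero h
  refine le_antisymm (numRadius_le (by positivity) fun x hx => ?_) ?_
  · simpa [hx] using norm_inner_self_le_half_opNorm_mul_sq hT x
  · linarith [norm_le_two_mul_numRadius T]
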